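/- Minkowski–Weyl decomposition: every nonempty polyhedron Q ⊆ ℝ^d can be written as Q = P + C + L, where P is a polytope, C is a pointed polyhedral cone, and L is a linear subspace. -/

import Mathlib

open Pointwise

/-- Standard dot product on `Fin d → ℝ`. -/
def dotp {d : ℕ} (x y : Fin d → ℝ) : ℝ := ∑ i, x i * y i

/-- A polyhedron is a finite intersection of affine closed half-spaces. -/
def IsPolyhedron {d : ℕ} (P : Set (Fin d → ℝ)) : Prop :=
  ∃ (m : ℕ) (a : Fin m → Fin d → ℝ) (b : Fin m → ℝ),
    P = {x | ∀ i, dotp (a i) x ≤ b i}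

/-- A polytope is the convex hull of finitely many points (a bounded polyhedron). -/
def IsPolytope {d : ℕ} (P : Set (Fin d → ℝ)) : Prop :=
  ∃ V : Finset (Fin d → ℝ), P = convexHull ℝ (V : Set (Fin d → ℝ))

/-- A polyhedral cone: the positive hull of finitely many vectors. -/
def IsPolyhedralCone {d : ℕ} (C : Set (Fin d → ℝ)) : Prop :=
  ∃ (k : ℕ) (v : Fin k → (Fin d → ℝ)),
    C = {x | ∃ lam : Fin k → ℝ, (∀ i, 0 ≤ lam i) ∧ x = ∑ i, lam i • v i}

/-!
Weyl: a finitely generated cone is an intersection of finitely many half-spaces. This follows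
by adding the generators one at a time, each step being a Fourier–Motzkin elimination. Minkowski,
the converse, follows from Weyl applied twice together with double duality.

Homogenize `Q = {x | a x ≤ b}` to the cone `K = {(t, x) | 0 ≤ t, a x ≤ t b}`. By Minkowski `K`
is generated by finitely many vectors `(t, w)`; those with `t > 0`, rescaled to `t = 1`, span the
polytope `P`, and those with `t = 0` generate a cone `C'` with `Q = P + C'`. Projecting `C'` along
its lineality space `L` onto a complement gives a pointed cone `C` with `C' = C + L`.
-/

open Matrix

theorem Matrix.flip_dotProductBilin {R ι : Type*} [CommSemiring R] [Fintype ι] :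
    (dotProductBilin R R : (ι → R) →ₗ[R] (ι → R) →ₗ[R] R).flip = dotProductBilin R R := by
  ext x y
  exact dotProduct_comm y x

namespace PointedCone

variable {𝕜 : Type*} [Field 𝕜] [LinearOrder 𝕜] [IsStrictOrderedRing 𝕜]

section Pairing

variable {M N : Type*} [AddCommGroup M] [Module 𝕜 M] [AddCommGroup N] [Module 𝕜 N]

theorem mem_sup_hull_singleton {C : PointedCone 𝕜 N} {v y : N} :
    y ∈ C ⊔ hull 𝕜 {v} ↔ ∃ t : 𝕜, 0 ≤ t ∧ y - t • v ∈ C := by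
  simp only [Submodule.mem_sup, Submodule.mem_span_singleton]
  constructor
  · rintro ⟨c, hc, _, ⟨t, rfl⟩, rfl⟩
    exact ⟨t, t.2, by simpa [Nonneg.coe_smul] using hc⟩
  · rintro ⟨t, ht, hc⟩
    exact ⟨_, hc, _, ⟨⟨t, ht⟩, rfl⟩, by simp [Nonneg.mk_smul]⟩

variable [DecidableEq M]

def fourierMotzkin (p : M →ₗ[𝕜] N →ₗ[𝕜] 𝕜) (A : Finset M) (v : N) : Finset M :=
  A.filter (0 ≤ p · v) ∪
    (A.filter (0 ≤ p · v) ×ˢ A.filter (p · v < 0)).image fun ab => p ab.1 v • ab.2 - p ab.2 v • ab.1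

theorem dual_sup_hull_singleton (p : M →ₗ[𝕜] N →ₗ[𝕜] 𝕜) (A : Finset M) (v : N) :
    dual p A ⊔ hull 𝕜 {v} = dual p (fourierMotzkin p A v) := by
  ext y
  simp only [mem_sup_hull_singleton, mem_dual, fourierMotzkin, Finset.coe_union, Finset.coe_filter,
    Finset.coe_product, Finset.coe_image, Set.mem_union, Set.mem_ofPred_eq, Set.mem_image,
    Set.mem_prod, Prod.exists]
  constructor
  · rintro ⟨t, ht, hy⟩ x (⟨ha, hav⟩ | ⟨a, b, ⟨⟨ha, hav⟩, hb, hbv⟩, rfl⟩)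
    · have := hy ha
      simp only [map_sub, map_smul, smul_eq_mul] at this
      nlinarith
    · have hay := hy ha
      have hby := hy hb
      simp only [map_sub, map_smul, LinearMap.sub_apply, LinearMap.smul_apply, smul_eq_mul]
        at hay hby ⊢
      nlinarith
  · intro hy
    have hpos : ∀ a ∈ A, 0 ≤ p a v → 0 ≤ p a y := fun a ha hav => hy (.inl ⟨ha, hav⟩)
    have hpair : ∀ a ∈ A, 0 ≤ p a v → ∀ b ∈ A, p b v < 0 → p b v * p a y ≤ p a v * p b y := by
      intro a ha hav b hb hbv
      have := hy (.inr ⟨a, b, ⟨⟨ha, hav⟩, hb, hbv⟩, rfl⟩)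
      simp only [map_sub, map_smul, LinearMap.sub_apply, LinearMap.smul_apply, smul_eq_mul] at this
      linarith
    -- the smallest admissible `t`: the largest lower bound imposed by a constraint with `p b v < 0`
    set T := insert 0 ((A.filter (p · v < 0)).image fun b => p b y / p b v)
    refine ⟨T.max' (Finset.insert_nonempty _ _), T.le_max' 0 (Finset.mem_insert_self _ _),
      fun a ha => ?_⟩
    simp only [map_sub, map_smul, smul_eq_mul, sub_nonneg]
    rcases lt_or_ge (p a v) 0 with hav | hav
    · have := T.le_max' _ (Finset.mem_insert_of_mem (Finset.mem_image_of_mem _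
        (Finset.mem_filter.2 ⟨ha, hav⟩)))
      rwa [div_le_iff_of_neg hav] at this
    · rcases Finset.mem_insert.1 (T.max'_mem (Finset.insert_nonempty _ _)) with h | h
      · rw [h, zero_mul]; exact hpos a ha hav
      · obtain ⟨b, hb, hbt⟩ := Finset.mem_image.1 h
        obtain ⟨hb, hbv⟩ := Finset.mem_filter.1 hb
        rw [← hbt, div_mul_eq_mul_div, div_le_iff_of_neg hbv]
        linarith [hpair a ha hav b hb hbv]

end Pairing

section Lineality

variable {E : Type*} [AddCommGroup E] [Module 𝕜 E]

theorem exists_fg_salient_add_lineal_eq {C : PointedCone 𝕜 E} (hC : C.FG) :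
    ∃ D : PointedCone 𝕜 E, D.FG ∧ (D ∩ -D : Set E) = {0} ∧ (D + C.lineal : Set E) = C := by
  obtain ⟨M, hLM⟩ := C.lineal.exists_isCompl
  set π := M.projection C.lineal hLM.symm
  have hsub : ∀ x, x - π x ∈ C.lineal := fun x => by
    rw [← Submodule.projection_eq_self_sub_projection]
    exact Submodule.projection_apply_mem _ _
  have hπ : ∀ x ∈ C, π x ∈ C := fun x hx => by
    simpa using C.add_mem hx (hsub x).2
  refine ⟨C.map π, hC.map _, ?_, ?_⟩
  · ext y
    simp only [Set.mem_inter_iff, Set.mem_neg, SetLike.mem_coe, mem_map, Set.mem_singleton_iff]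
    constructor
    · rintro ⟨⟨x, hx, rfl⟩, ⟨x', hx', hx'y⟩⟩
      have hL : π x ∈ C.lineal := mem_lineal.2 ⟨hπ x hx, hx'y ▸ hπ x' hx'⟩
      exact (Submodule.disjoint_def.1 hLM.disjoint) _ hL (Submodule.projection_apply_mem _ _)
    · rintro rfl
      exact ⟨⟨0, C.zero_mem, map_zero _⟩, ⟨0, C.zero_mem, by simp⟩⟩
  · have hsup : C.map π ⊔ C.lineal = C := by
      refine le_antisymm (sup_le ?_ C.lineal_le) fun x hx => ?_
      · rintro _ ⟨x, hx, rfl⟩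
        exact hπ x hx
      · exact Submodule.mem_sup.2
          ⟨π x, mem_map.2 ⟨x, hx, rfl⟩, x - π x, hsub x, add_sub_cancel _ _⟩
    exact (Submodule.coe_sup _ _).symm.trans (congrArg SetLike.coe hsup)

end Lineality

section DotProduct

variable {ι : Type*} [Fintype ι]

theorem dualFG_bot : (⊥ : PointedCone 𝕜 (ι → 𝕜)).DualFG (dotProductBilin 𝕜 𝕜) := by
  classical
  refine ⟨Finset.univ.image (Pi.single · 1) ∪ Finset.univ.image (-Pi.single · 1), ?_⟩
  ext y
  simp only [mem_dual, Finset.coe_union, Finset.coe_image, Finset.coe_univ, Set.image_univ,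
    Set.mem_union, Set.mem_range, Submodule.mem_bot]
  constructor
  · intro h
    funext i
    have h₁ := h (.inl ⟨i, rfl⟩)
    have h₂ := h (.inr ⟨i, rfl⟩)
    simp only [dotProductBilin_apply_apply, neg_dotProduct, single_dotProduct, one_mul] at h₁ h₂
    exact le_antisymm (neg_nonneg.1 h₂) h₁
  · rintro rfl
    simp

theorem dualFG_of_fg {C : PointedCone 𝕜 (ι → 𝕜)} (hC : C.FG) :
    C.DualFG (dotProductBilin 𝕜 𝕜) := by
  classical
  obtain ⟨s, rfl⟩ := hC
  induction s using Finset.induction_on with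
  | empty => simpa using dualFG_bot
  | insert v s _ ih =>
    obtain ⟨A, hA⟩ := ih
    refine ⟨fourierMotzkin (dotProductBilin 𝕜 𝕜) A v, ?_⟩
    rw [← dual_sup_hull_singleton, hA, Finset.coe_insert, Submodule.span_insert, sup_comm]

theorem dualFG_hull_finset (s : Finset (ι → 𝕜)) :
    (hull 𝕜 (s : Set (ι → 𝕜))).DualFG (dotProductBilin 𝕜 𝕜) :=
  dualFG_of_fg (Submodule.fg_span s.finite_toSet)

/- With `hull A = dual B` (Weyl), `dual A = dual (dual B) = hull B`; the last step is double
duality for `hull B`, which holds since `hull B` is itself the dual of a finite set (Weyl again). -/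
theorem fg_of_dualFG {C : PointedCone 𝕜 (ι → 𝕜)} (hC : C.DualFG (dotProductBilin 𝕜 𝕜)) :
    C.FG := by
  obtain ⟨A, rfl⟩ := hC
  obtain ⟨B, hB⟩ := dualFG_hull_finset A
  refine ⟨B, ?_⟩
  have := (dualFG_hull_finset B).dual_dual_flip
  rwa [flip_dotProductBilin, dual_hull, hB, dual_hull, eq_comm] at this

end DotProduct

section Homogenization

variable {m n : ℕ} {K : PointedCone 𝕜 (Fin (n + 1) → 𝕜)}

theorem convexHull_add_hull_subset_setOf_vecCons_one_mem {V R : Set (Fin n → 𝕜)}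
    (hV : ∀ v ∈ V, vecCons 1 v ∈ K) (hR : ∀ r ∈ R, vecCons 0 r ∈ K) :
    convexHull 𝕜 V + (hull 𝕜 R : Set (Fin n → 𝕜)) ⊆ {x | vecCons 1 x ∈ K} := by
  have hconv : convexHull 𝕜 V ⊆ {x | vecCons 1 x ∈ K} :=
    convexHull_min hV fun y hy z hz a b ha hb hab => by
      simpa [smul_cons, cons_add_cons, hab] using K.convex hy hz ha hb hab
  have hcone : hull 𝕜 R ≤ K.comap (LinearMap.vecCons 0 LinearMap.id) :=
    Submodule.span_le.2 fun r hr => by simpa [LinearMap.vecCons_apply] using hR r hr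
  rintro _ ⟨x, hx, r, hr, rfl⟩
  simpa [cons_add_cons, LinearMap.vecCons_apply] using K.add_mem (hconv hx) (hcone hr)

theorem mem_convexHull_add_hull_of_vecCons_one_mem_hull {W : Finset (Fin (n + 1) → 𝕜)}
    {V R : Set (Fin n → 𝕜)} (hW : ∀ w ∈ W, 0 ≤ w 0)
    (hV : ∀ w ∈ W, w 0 ≠ 0 → (w 0)⁻¹ • vecTail w ∈ V) (hR : ∀ w ∈ W, w 0 = 0 → vecTail w ∈ R)
    {x : Fin n → 𝕜} (hx : vecCons 1 x ∈ hull 𝕜 (W : Set (Fin (n + 1) → 𝕜))) :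
    x ∈ convexHull 𝕜 V + (hull 𝕜 R : Set (Fin n → 𝕜)) := by
  obtain ⟨c, -, hc⟩ := Submodule.mem_span_finset.1 hx
  have hsum : ∑ w ∈ W, (c w : 𝕜) • w = vecCons 1 x := by simpa [Nonneg.coe_smul] using hc
  have hhead : ∑ w ∈ W, (c w : 𝕜) * w 0 = 1 := by
    simpa only [Finset.sum_apply, Pi.smul_apply, smul_eq_mul, cons_val_zero] using congrFun hsum 0
  have htail : ∑ w ∈ W, (c w : 𝕜) • vecTail w = x := funext fun i => by
    simpa only [Finset.sum_apply, Pi.smul_apply, cons_val_succ, vecTail, Function.comp_apply]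
      using congrFun hsum i.succ
  rw [← Finset.sum_filter_add_sum_filter_not W (· 0 = 0), Finset.sum_eq_zero fun w hw => by
    rw [(Finset.mem_filter.1 hw).2, mul_zero], zero_add] at hhead
  rw [← Finset.sum_filter_add_sum_filter_not W (· 0 = 0), add_comm] at htail
  refine ⟨_, ?_, _, ?_, htail⟩
  · have hrescale : ∀ w ∈ W.filter (¬ · 0 = 0),
        (c w : 𝕜) • vecTail w = ((c w : 𝕜) * w 0) • ((w 0)⁻¹ • vecTail w) := fun w hw => by
      rw [smul_smul, mul_assoc, mul_inv_cancel₀ (Finset.mem_filter.1 hw).2, mul_one]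
    rw [Finset.sum_congr rfl hrescale]
    refine (convex_convexHull 𝕜 V).sum_mem (fun w hw => ?_) hhead (fun w hw => ?_)
    · exact mul_nonneg (c w).2 (hW w (Finset.mem_filter.1 hw).1)
    · exact subset_convexHull 𝕜 V (hV w (Finset.mem_filter.1 hw).1 (Finset.mem_filter.1 hw).2)
  · refine Submodule.sum_mem _ fun w hw => (hull 𝕜 R).smul_mem (c w).2 (subset_hull ?_)
    exact hR w (Finset.mem_filter.1 hw).1 (Finset.mem_filter.1 hw).2

theorem exists_setOf_vecCons_one_mem_eq (hK : K.FG)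
    (hK₀ : ∀ y ∈ K, 0 ≤ y 0) : ∃ (V : Finset (Fin n → 𝕜)) (C : PointedCone 𝕜 (Fin n → 𝕜)),
      C.FG ∧ {x | vecCons 1 x ∈ K} = convexHull 𝕜 (V : Set (Fin n → 𝕜)) + C := by
  obtain ⟨W, rfl⟩ := hK
  have hW : ∀ w ∈ W, 0 ≤ w 0 := fun w hw => hK₀ w (subset_hull hw)
  let V := (W.filter (· 0 ≠ 0)).image fun w => (w 0)⁻¹ • vecTail w
  let R := (W.filter (· 0 = 0)).image vecTail
  have hV : ∀ w ∈ W, w 0 ≠ 0 → (w 0)⁻¹ • vecTail w ∈ V := fun w hw hw0 =>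
    Finset.mem_image_of_mem _ (Finset.mem_filter.2 ⟨hw, hw0⟩)
  have hR : ∀ w ∈ W, w 0 = 0 → vecTail w ∈ R := fun w hw hw0 =>
    Finset.mem_image_of_mem _ (Finset.mem_filter.2 ⟨hw, hw0⟩)
  refine ⟨V, hull 𝕜 R, Submodule.fg_span R.finite_toSet, subset_antisymm
    (fun x => mem_convexHull_add_hull_of_vecCons_one_mem_hull hW hV hR)
    (convexHull_add_hull_subset_setOf_vecCons_one_mem ?_ ?_)⟩
  · simp only [V, Finset.coe_image, Finset.coe_filter, Set.forall_mem_image]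
    intro w ⟨hw, hw0⟩
    have e : vecCons 1 ((w 0)⁻¹ • vecTail w) = (w 0)⁻¹ • w := by
      ext i
      refine Fin.cases ?_ (fun j => ?_) i <;> simp [hw0, vecTail]
    rw [e]
    exact (hull 𝕜 _).smul_mem (inv_nonneg.2 (hW w hw)) (subset_hull hw)
  · simp only [R, Finset.coe_image, Finset.coe_filter, Set.forall_mem_image]
    intro w ⟨hw, hw0⟩
    have e : vecCons 0 (vecTail w) = w := by
      rw [← hw0]
      exact cons_head_tail w
    rw [e]
    exact subset_hull hw

def homogenization (a : Fin m → Fin n → 𝕜) (b : Fin m → 𝕜) : PointedCone 𝕜 (Fin (n + 1) → 𝕜) :=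
  dual (dotProductBilin 𝕜 𝕜) (insert (vecCons 1 0) (Set.range fun i => vecCons (b i) (-a i)))

theorem vecCons_mem_homogenization {a : Fin m → Fin n → 𝕜} {b : Fin m → 𝕜} {t : 𝕜}
    {x : Fin n → 𝕜} :
    vecCons t x ∈ homogenization a b ↔ 0 ≤ t ∧ ∀ i, a i ⬝ᵥ x ≤ t * b i := by
  simp [homogenization, mul_comm]

theorem exists_eq_convexHull_add_fg (a : Fin m → Fin n → 𝕜) (b : Fin m → 𝕜) :
    ∃ (V : Finset (Fin n → 𝕜)) (C : PointedCone 𝕜 (Fin n → 𝕜)), C.FG ∧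
      {x | ∀ i, a i ⬝ᵥ x ≤ b i} = convexHull 𝕜 (V : Set (Fin n → 𝕜)) + C := by
  have hK : (homogenization a b).FG :=
    fg_of_dualFG (DualFG.dual_of_finite _ ((Set.finite_range _).insert _))
  have hK₀ : ∀ y ∈ homogenization a b, 0 ≤ y 0 := fun y hy => by
    rw [← cons_head_tail y, vecCons_mem_homogenization] at hy
    exact hy.1
  obtain ⟨V, C, hC, hVC⟩ := exists_setOf_vecCons_one_mem_eq hK hK₀
  refine ⟨V, C, hC, ?_⟩
  rw [← hVC]
  ext x
  simp [vecCons_mem_homogenization]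

end Homogenization

end PointedCone

open PointedCone

theorem isPolyhedralCone_of_fg {d : ℕ} {C : PointedCone ℝ (Fin d → ℝ)} (hC : C.FG) :
    IsPolyhedralCone (C : Set (Fin d → ℝ)) := by
  obtain ⟨k, v, hv⟩ := Submodule.fg_iff_exists_fin_generating_family.1 hC
  refine ⟨k, v, ?_⟩
  ext x
  rw [← hv, SetLike.mem_coe, Submodule.mem_span_range_iff_exists_fun]
  constructor
  · rintro ⟨c, rfl⟩
    exact ⟨fun i => c i, fun i => (c i).2, by simp [Nonneg.coe_smul]⟩
  · rintro ⟨lam, hlam, rfl⟩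
    exact ⟨fun i => ⟨lam i, hlam i⟩, by simp [Nonneg.mk_smul]⟩

theorem minkowski_weyl_decomposition_general (d : ℕ) (Q : Set (Fin d → ℝ))
    (hQ : IsPolyhedron Q) :
    ∃ (P C : Set (Fin d → ℝ)) (L : Submodule ℝ (Fin d → ℝ)),
      IsPolytope P ∧ IsPolyhedralCone C ∧ C ∩ (-C) = {0} ∧
      Q = P + C + (L : Set (Fin d → ℝ)) := by
  obtain ⟨m, a, b, rfl⟩ := hQ
  obtain ⟨V, C, hC, hQ⟩ := exists_eq_convexHull_add_fg a b
  obtain ⟨D, hD, hDsalient, hDC⟩ := exists_fg_salient_add_lineal_eq hC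
  refine ⟨convexHull ℝ V, D, C.lineal, ⟨V, rfl⟩, isPolyhedralCone_of_fg hD, hDsalient, ?_⟩
  rw [add_assoc, hDC]
  exact hQ

/-- Minkowski–Weyl decomposition: every nonempty polyhedron `Q` decomposes as a
Minkowski sum `Q = P + C + L` with `P` a polytope, `C` a pointed polyhedral cone
(containing no line, i.e. `C ∩ (-C) = {0}`), and `L` a linear subspace. -/
theorem minkowski_weyl_decomposition (d : ℕ) (Q : Set (Fin d → ℝ))
    (hQ : IsPolyhedron Q) (hne : Q.Nonempty) :
    ∃ (P C : Set (Fin d → ℝ)) (L : Submodule ℝ (Fin d → ℝ)),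
      IsPolytope P ∧ IsPolyhedralCone C ∧ C ∩ (-C) = {0} ∧
      Q = P + C + (L : Set (Fin d → ℝ)) :=
  minkowski_weyl_decomposition_general d Q hQ
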